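/- arXiv:2202.02116 — 3 statements merged into one kernel-verified Lean document; each statement's English description precedes it below -/
import Mathlib

section
/- Fix α>0 and R>0, and for κ>0 set β:=(√(κ⁴+4α)−κ²)/2. Then sup_{0≤r≤R} |(1+κ²r²)^{−β/(2κ²)}−e^{−√α r²/2}|=O(κ²) as κ→0; that is, there exist constants C>0 and κ₀>0 such that |(1+κ²r²)^{−β/(2κ²)}−e^{−√α r²/2}|≤Cκ² for all r∈[0,R] and all 0<κ≤κ₀. In particular β=√α+O(κ²) as κ→0. -/
open MeasureTheory Real Filter Set
open scoped Classical
noncomputable section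

/-- Euclidean d-space, the coordinate model of the hyperbolic space `H^d(κ)`. -/
abbrev Ed (d : ℕ) := EuclideanSpace ℝ (Fin d)

/-- The Euclidean Laplacian in coordinates. -/
def lapE {d : ℕ} (f : Ed d → ℝ) (x : Ed d) : ℝ :=
  ∑ i : Fin d, iteratedFDeriv ℝ 2 f x ![EuclideanSpace.single i 1, EuclideanSpace.single i 1]

/-- The Laplace–Beltrami operator of `H^d(κ)` in the coordinates where the metric is
`g_κ = (1+κ²r²)⁻¹ dr² + r² g_{S^{d-1}}`, i.e. `Δ_κ = Δ + κ²( r²∂²_r + d r ∂_r )`. -/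
def hypLap {d : ℕ} (κ : ℝ) (f : Ed d → ℝ) (x : Ed d) : ℝ :=
  lapE f x + κ^2 * (iteratedFDeriv ℝ 2 f x ![x, x] + (d : ℝ) * (fderiv ℝ f x x))

def arcosh (z : ℝ) : ℝ := Real.log (z + Real.sqrt (z^2 - 1))

/-- The geodesic distance of `H^d(κ)` in the above coordinates. -/
def hypDist {d : ℕ} (κ : ℝ) (x y : Ed d) : ℝ :=
  κ⁻¹ * _root_.arcosh (κ^2 * (Real.sqrt (κ⁻¹^2 + ‖x‖^2) * Real.sqrt (κ⁻¹^2 + ‖y‖^2) - (inner ℝ x y : ℝ)))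

/-- The geodesic distance to the base point `p₀` (the origin) of `H^d(κ)`. -/
def hypRho {d : ℕ} (κ : ℝ) (x : Ed d) : ℝ := κ⁻¹ * Real.arsinh (κ * ‖x‖)

/-- The Riemannian volume measure of `H^d(κ)` in the above coordinates. -/
def hypVol (d : ℕ) (κ : ℝ) : Measure (Ed d) :=
  volume.withDensity fun x => ENNReal.ofReal ((1 + κ^2 * ‖x‖^2) ^ (-(1:ℝ)/2))

/-- The exponential map of `H^d(κ)` at the base point `p₀` (the origin):
`r = sinh(κρ)/κ` along radial geodesics. -/
def hypExp {d : ℕ} (κ : ℝ) (v : Ed d) : Ed d :=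
  if v = 0 then 0 else (Real.sinh (κ * ‖v‖) / (κ * ‖v‖)) • v

/-- The hyperbolic harmonic oscillator potential `V^H_κ = r²/(1+κ²r²)`. -/
def VH {d : ℕ} (κ : ℝ) (x : Ed d) : ℝ := ‖x‖^2 / (1 + κ^2 * ‖x‖^2)

/-- The hyperbolic Coulomb potential `V^C_κ = -√(κ² + r⁻²)`. -/
def VC {d : ℕ} (κ : ℝ) (x : Ed d) : ℝ := - Real.sqrt (κ^2 + (‖x‖^2)⁻¹)

/-- C^k norm of a function on a set. -/
def cknormOn {F : Type*} [NormedAddCommGroup F] [NormedSpace ℝ F]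
    (k : ℕ) (s : Set F) (f : F → ℝ) : ℝ :=
  ∑ i ∈ Finset.range (k+1), ⨆ x ∈ s, ‖iteratedFDeriv ℝ i f x‖

/-- Rising Pochhammer symbol. -/
def poch (x : ℝ) (k : ℕ) : ℝ := (ascPochhammer ℝ k).eval x

/-- Jacobi polynomial `P_n^{(a;b)}` via the terminating hypergeometric series. -/
def jacobiP (n : ℕ) (a b : ℝ) (z : ℝ) : ℝ :=
  (poch (a+1) n / (n.factorial : ℝ)) *
    ∑ k ∈ Finset.range (n+1),
      (poch (-(n:ℝ)) k * poch (1+a+b+(n:ℝ)) k) / (poch (a+1) k * (k.factorial : ℝ)) *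
        ((1-z)/2)^k

/-- Generalized Laguerre polynomial `L_n^{(a)}`. -/
def laguerreL (n : ℕ) (a : ℝ) (z : ℝ) : ℝ :=
  (poch (a+1) n / (n.factorial : ℝ)) *
    ∑ k ∈ Finset.range (n+1), poch (-(n:ℝ)) k / (poch (a+1) k * (k.factorial : ℝ)) * z^k

/-- Bessel function of the first kind of order ν. -/
def besselJ (ν : ℝ) (x : ℝ) : ℝ :=
  ∑' m : ℕ, ((-1)^m / ((m.factorial : ℝ) * Real.Gamma ((m:ℝ) + ν + 1))) * (x/2)^(2*(m:ℝ)+ν)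

/-- A spherical harmonic of degree `l` on `S^{d-1}`: the restriction to the unit sphere of a
harmonic polynomial, homogeneous of degree `l`. -/
def IsSphericalHarmonic (d l : ℕ) (Y : Ed d → ℝ) : Prop :=
  ∃ P : Ed d → ℝ, ContDiff ℝ (⊤ : ℕ∞) P ∧ (∀ (c : ℝ) (x : Ed d), P (c • x) = c^l * P x) ∧
    (∀ x, lapE P x = 0) ∧ ∀ x ∈ Metric.sphere (0 : Ed d) 1, Y x = P x

/-- The dimension `d_l` of the space of spherical harmonics of degree `l` on `S^{d-1}`. -/
def dimSH (d l : ℕ) : ℕ :=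
  if l = 0 then 1 else ((l+d-2).choose l * (2*l+d-2)) / (l+d-2)

/-- m-fold application of the operator `(κ/sinh(κρ)) ∂_ρ`. -/
def radialOpIter (κ : ℝ) : ℕ → (ℝ → ℝ) → (ℝ → ℝ)
  | 0, f => f
  | (m+1), f => fun ρ => (κ / Real.sinh (κ*ρ)) * deriv (radialOpIter κ m f) ρ

/-- The heat kernel `H(t,ρ)` of `H^d(κ)`, extended by 0 for `t ≤ 0`. -/
def heatKernelH (d : ℕ) (κ : ℝ) (t ρ : ℝ) : ℝ :=
  if t ≤ 0 then 0
  else if d % 2 = 1 then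
    ((-1)^(d/2) / (2^(d/2) * Real.pi^(d/2) * Real.sqrt (4*Real.pi*t))) *
      radialOpIter κ (d/2)
        (fun ρ' => Real.exp (-κ^2*((d/2 : ℕ):ℝ)^2*t - ρ'^2/(4*t))) ρ
  else
    ((-1)^(d/2-1) * Real.exp (-(2*((d/2-1 : ℕ):ℝ)+1)^2*κ^2*t/4) * κ /
        (t^((3:ℝ)/2) * 2^(((d/2-1 : ℕ):ℝ)+5/2) * Real.pi^(((d/2-1 : ℕ):ℝ)+3/2))) *
      radialOpIter κ (d/2-1)
        (fun ρ' => ∫ s in Set.Ioi ρ',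
          s * Real.exp (-s^2/(4*t)) / Real.sqrt (Real.cosh (κ*s) - Real.cosh (κ*ρ'))) ρ

end


lemma exp_lip_aux {a b : ℝ} (ha : 0 ≤ a) (h : a ≤ b) :
    Real.exp (-a) - Real.exp (-b) ≤ b - a := by
  have h1 := Real.add_one_le_exp (a - b)
  have h2 : Real.exp (-a) ≤ 1 := Real.exp_le_one_iff.mpr (by linarith)
  have h3 : Real.exp (-a) - Real.exp (-b) =
      Real.exp (-a) * (1 - Real.exp (a - b)) := by
    rw [mul_sub, mul_one, ← Real.exp_add]; ring_nf
  have h4 : Real.exp (a - b) ≤ 1 := Real.exp_le_one_iff.mpr (by linarith)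
  have h5 := Real.exp_pos (-a)
  nlinarith

lemma exp_lip {a b : ℝ} (ha : 0 ≤ a) (hb : 0 ≤ b) :
    |Real.exp (-a) - Real.exp (-b)| ≤ |a - b| := by
  rcases le_total a b with h | h
  · have h1 := exp_lip_aux ha h
    have h2 : Real.exp (-b) ≤ Real.exp (-a) := Real.exp_le_exp.mpr (by linarith)
    rw [abs_of_nonneg (by linarith), abs_of_nonpos (by linarith)]
    linarith
  · have h1 := exp_lip_aux hb h
    have h2 : Real.exp (-a) ≤ Real.exp (-b) := Real.exp_le_exp.mpr (by linarith)
    rw [abs_of_nonpos (by linarith), abs_of_nonneg (by linarith)]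
    linarith

theorem statement_11 (α R : ℝ) (hα : 0 < α) (hR : 0 < R) :
    ∃ C > 0, ∃ κ₀ > 0, ∀ κ : ℝ, 0 < κ → κ ≤ κ₀ →
      (∀ r ∈ Set.Icc (0:ℝ) R,
        |(1 + κ^2*r^2) ^ (-((Real.sqrt (κ^4+4*α) - κ^2)/2) / (2*κ^2)) -
          Real.exp (-(Real.sqrt α) * r^2 / 2)| ≤ C * κ^2) ∧
      |(Real.sqrt (κ^4+4*α) - κ^2)/2 - Real.sqrt α| ≤ C * κ^2 := by
  set s := Real.sqrt α with hs
  have hs0 : 0 < s := Real.sqrt_pos.mpr hα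
  have hssq : s^2 = α := Real.sq_sqrt hα.le
  clear_value s
  set C₁ : ℝ := 1/2 + 1/(8*s) with hC₁
  clear_value C₁
  have hC₁0 : 0 < C₁ := by rw [hC₁]; positivity
  refine ⟨C₁ + C₁*R^2 + s*R^4, by positivity, 1, one_pos, ?_⟩
  intro κ hκ hκ1
  have hκ2 : (0:ℝ) < κ^2 := by positivity
  have hκ21 : κ^2 ≤ 1 := by nlinarith
  set β : ℝ := (Real.sqrt (κ^4+4*α) - κ^2)/2 with hβdef
  clear_value β
  -- bounds on sqrt(κ⁴+4α)
  have hge : 2*s ≤ Real.sqrt (κ^4+4*α) := by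
    have : (2*s) = Real.sqrt ((2*s)^2) := (Real.sqrt_sq (by positivity)).symm
    rw [this]
    apply Real.sqrt_le_sqrt; nlinarith
  have hge2 : κ^2 ≤ Real.sqrt (κ^4+4*α) := by
    have : (κ^2) = Real.sqrt ((κ^2)^2) := (Real.sqrt_sq hκ2.le).symm
    rw [this]
    apply Real.sqrt_le_sqrt; nlinarith
  have hle : Real.sqrt (κ^4+4*α) ≤ 2*s + κ^4/(4*s) := by
    have h1 : Real.sqrt (κ^4+4*α) ≤ Real.sqrt ((2*s + κ^4/(4*s))^2) := by
      apply Real.sqrt_le_sqrt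
      have h2 : (2*s + κ^4/(4*s))^2 = 4*s^2 + κ^4 + (κ^4/(4*s))^2 := by
        field_simp; ring
      nlinarith [sq_nonneg (κ^4/(4*s))]
    rwa [Real.sqrt_sq (by positivity)] at h1
  have hle2 : Real.sqrt (κ^4+4*α) ≤ κ^2 + 2*s := by
    have h1 : Real.sqrt (κ^4+4*α) ≤ Real.sqrt ((κ^2 + 2*s)^2) := by
      apply Real.sqrt_le_sqrt; nlinarith
    rwa [Real.sqrt_sq (by positivity)] at h1
  have hβ0 : 0 ≤ β := by rw [hβdef]; linarith
  have hβle : β ≤ s := by rw [hβdef]; linarith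
  have hβdiff : |β - s| ≤ C₁ * κ^2 := by
    have hCeq : C₁ * κ^2 = κ^2/2 + κ^2/(8*s) := by rw [hC₁]; ring
    have hZ : 0 ≤ κ^2/(8*s) := by positivity
    have hk42 : κ^4 ≤ κ^2 := by nlinarith
    have h1 : κ^4/(4*s) ≤ κ^2/(4*s) := by
      apply div_le_div_of_nonneg_right hk42 (by positivity)
    have h2 : κ^2/(4*s) = 2*(κ^2/(8*s)) := by ring
    have h3 : κ^4/(4*s) ≤ 2*(κ^2/(8*s)) := by linarith
    rw [abs_le, hCeq]
    constructor
    · rw [hβdef]; linarith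
    · rw [hβdef]; linarith
  constructor
  · intro r hr
    obtain ⟨hr0, hrR⟩ := hr
    have hx0 : (0:ℝ) ≤ κ^2*r^2 := by positivity
    have hpos : (0:ℝ) < 1 + κ^2*r^2 := by linarith
    have hL0 : 0 ≤ Real.log (1 + κ^2*r^2) := Real.log_nonneg (by linarith)
    have hLup : Real.log (1 + κ^2*r^2) ≤ κ^2*r^2 := by
      have := Real.log_le_sub_one_of_pos hpos
      linarith
    have hLlo : κ^2*r^2 - (κ^2*r^2)^2 ≤ Real.log (1 + κ^2*r^2) := by
      have h1 := Real.log_le_sub_one_of_pos (inv_pos.mpr hpos)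
      rw [Real.log_inv] at h1
      have h6 : 1 - (1+κ^2*r^2)⁻¹ ≤ Real.log (1 + κ^2*r^2) := by linarith
      have h7 : κ^2*r^2 - (κ^2*r^2)^2 ≤ 1 - (1+κ^2*r^2)⁻¹ := by
        rw [← sub_nonneg]
        have h8 : 1 - (1+κ^2*r^2)⁻¹ - (κ^2*r^2 - (κ^2*r^2)^2)
            = (κ^2*r^2)^3 / (1+κ^2*r^2) := by
          field_simp; ring
        rw [h8]; positivity
      linarith
    have ha0 : 0 ≤ β * Real.log (1 + κ^2*r^2) / (2*κ^2) :=
      div_nonneg (mul_nonneg hβ0 hL0) (by positivity)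
    have hb0 : 0 ≤ s * r^2 / 2 := by positivity
    have hrw1 : (1 + κ^2*r^2) ^ (-β / (2*κ^2)) =
        Real.exp (-(β * Real.log (1 + κ^2*r^2) / (2*κ^2))) := by
      rw [Real.rpow_def_of_pos hpos]
      congr 1
      ring
    have hrw2 : Real.exp (-s * r^2 / 2) = Real.exp (-(s * r^2 / 2)) := by
      congr 1; ring
    rw [hrw1, hrw2]
    have hlip := exp_lip ha0 hb0
    have hβup : β - s ≤ C₁ * κ^2 := (abs_le.mp hβdiff).2
    have hβlo : -(C₁ * κ^2) ≤ β - s := (abs_le.mp hβdiff).1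
    have hrR2 : r^2 ≤ R^2 := pow_le_pow_left₀ hr0 hrR 2
    have h4 : κ^2*r^2 ≤ κ^2*R^2 := mul_le_mul_of_nonneg_left hrR2 hκ2.le
    have hnum : |β*Real.log (1 + κ^2*r^2) - s*(κ^2*r^2)| ≤ κ^4 * (C₁*R^2 + s*R^4) := by
      have g1 : β*(κ^2*r^2 - (κ^2*r^2)^2) ≤ β*Real.log (1 + κ^2*r^2) :=
        mul_le_mul_of_nonneg_left hLlo hβ0
      have g1' : β*Real.log (1 + κ^2*r^2) ≤ β*(κ^2*r^2) :=
        mul_le_mul_of_nonneg_left hLup hβ0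
      have g2 : -(C₁*κ^2)*(κ^2*r^2) ≤ (β-s)*(κ^2*r^2) :=
        mul_le_mul_of_nonneg_right hβlo hx0
      have g2' : (β-s)*(κ^2*r^2) ≤ (C₁*κ^2)*(κ^2*r^2) :=
        mul_le_mul_of_nonneg_right hβup hx0
      have g3 : β*(κ^2*r^2)^2 ≤ s*(κ^2*r^2)^2 :=
        mul_le_mul_of_nonneg_right hβle (sq_nonneg _)
      have g4 : (κ^2*r^2)^2 ≤ (κ^2*R^2)^2 := pow_le_pow_left₀ hx0 h4 2
      have g5 : s*(κ^2*r^2)^2 ≤ s*(κ^2*R^2)^2 := mul_le_mul_of_nonneg_left g4 hs0.le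
      have g6 : (C₁*κ^2)*(κ^2*r^2) ≤ (C₁*κ^2)*(κ^2*R^2) :=
        mul_le_mul_of_nonneg_left h4 (by positivity)
      have g7 : 0 ≤ κ^4*(s*R^4) := by positivity
      have g8 : 0 ≤ κ^4*(C₁*R^2) := by positivity
      rw [abs_le]
      constructor
      · linarith
      · linarith
    have hab : β * Real.log (1 + κ^2*r^2) / (2*κ^2) - s * r^2 / 2
        = (β*Real.log (1 + κ^2*r^2) - s*(κ^2*r^2)) / (2*κ^2) := by
      field_simp
    have habs : |β * Real.log (1 + κ^2*r^2) / (2*κ^2) - s * r^2 / 2|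
        ≤ (C₁*R^2 + s*R^4)/2 * κ^2 := by
      rw [hab, abs_div, abs_of_pos (by positivity : (0:ℝ) < 2*κ^2),
        div_le_iff₀ (by positivity : (0:ℝ) < 2*κ^2)]
      calc |β*Real.log (1 + κ^2*r^2) - s*(κ^2*r^2)| ≤ κ^4 * (C₁*R^2 + s*R^4) := hnum
        _ = (C₁*R^2 + s*R^4)/2 * κ^2 * (2*κ^2) := by ring
    calc |Real.exp (-(β * Real.log (1 + κ^2*r^2) / (2*κ^2)))
          - Real.exp (-(s * r^2 / 2))|
        ≤ |β * Real.log (1 + κ^2*r^2) / (2*κ^2) - s * r^2 / 2| := hlip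
      _ ≤ (C₁*R^2 + s*R^4)/2 * κ^2 := habs
      _ ≤ (C₁ + C₁*R^2 + s*R^4) * κ^2 := by
          have e1 : 0 ≤ C₁*R^2 := by positivity
          have e2 : 0 ≤ s*R^4 := by positivity
          apply mul_le_mul_of_nonneg_right _ hκ2.le
          linarith
  · calc |β - s| ≤ C₁ * κ^2 := hβdiff
      _ ≤ (C₁ + C₁*R^2 + s*R^4) * κ^2 := by
          have e1 : 0 ≤ C₁*R^2 := by positivity
          have e2 : 0 ≤ s*R^4 := by positivity
          apply mul_le_mul_of_nonneg_right _ hκ2.le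
          linarith
end

section
/- Fix α>0, R>0, d≥2 and nonnegative integers n,l. Then sup_{0≤r≤R} |(√(1+κ²r²)+κr)^{−n−α/(2κ(n+l+(d−1)/2))}−e^{−αr/(2(n+l+(d−1)/2))}|=O(κ) as κ→0; that is, there exist constants C>0 and κ₀>0 such that the quantity inside the absolute value is bounded by Cκ for all r∈[0,R] and all 0<κ≤κ₀. -/
open MeasureTheory Real Filter Set
open scoped Classical
lemma my_arsinh_le_self {x : ℝ} (hx : 0 ≤ x) : Real.arsinh x ≤ x := by
  rw [← Real.sinh_le_sinh, Real.sinh_arsinh]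
  exact (Real.self_le_sinh_iff.2 hx)

lemma my_arsinh_ge {x : ℝ} (hx : 0 ≤ x) : x - x^2 ≤ Real.arsinh x := by
  have h1 : (1:ℝ) ≤ Real.sqrt (1 + x^2) := by
    rw [Real.le_sqrt' one_pos]; nlinarith
  have hlog : Real.log (1 + x) ≤ Real.arsinh x := by
    rw [Real.arsinh]
    apply Real.log_le_log (by linarith)
    linarith
  have hx1 : (0:ℝ) < 1 + x := by linarith
  have h2 : Real.log (1 + x)⁻¹ ≤ (1 + x)⁻¹ - 1 :=
    Real.log_le_sub_one_of_pos (by positivity)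
  rw [Real.log_inv] at h2
  have h3 : x / (1 + x) ≤ Real.log (1 + x) := by
    have heq : 1 - (1+x)⁻¹ = x / (1+x) := by field_simp; ring
    linarith
  have h4 : x - x^2 ≤ x / (1 + x) := by
    rw [le_div_iff₀ hx1]; nlinarith
  linarith

lemma my_exp_sub_one {u : ℝ} : |Real.exp u - 1| ≤ |u| * Real.exp |u| := by
  rcases le_or_gt 0 u with h | h
  · rw [abs_of_nonneg h, abs_of_nonneg (by linarith [Real.add_one_le_exp u] : (0:ℝ) ≤ Real.exp u - 1)]
    have := Real.add_one_le_exp (-u)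
    rw [Real.exp_neg] at this
    have hpos := Real.exp_pos u
    have : Real.exp u - 1 ≤ u * Real.exp u := by
      have h2 : (-u + 1) * Real.exp u ≤ 1 := by
        rw [← Real.exp_neg u] at *
        calc (-u+1) * Real.exp u ≤ (Real.exp u)⁻¹ * Real.exp u := by
              apply mul_le_mul_of_nonneg_right _ hpos.le
              rw [← Real.exp_neg u]; linarith [Real.add_one_le_exp (-u)]
          _ = 1 := inv_mul_cancel₀ hpos.ne'
      nlinarith
    linarith
  · rw [abs_of_neg h, abs_of_nonpos (by linarith [Real.exp_lt_one_iff.2 h] : Real.exp u - 1 ≤ 0)]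
    have h1 := Real.add_one_le_exp u
    have h2 : (1:ℝ) ≤ Real.exp (-u) := Real.one_le_exp (by linarith)
    nlinarith

set_option maxHeartbeats 1600000 in
theorem statement_12 (α R : ℝ) (hα : 0 < α) (hR : 0 < R) (d : ℕ) (hd : 2 ≤ d) (n l : ℕ) :
    ∃ C > 0, ∃ κ₀ > 0, ∀ κ : ℝ, 0 < κ → κ ≤ κ₀ → ∀ r ∈ Set.Icc (0:ℝ) R,
      |(Real.sqrt (1+κ^2*r^2) + κ*r) ^ (-(n:ℝ) - α/(2*κ*((n:ℝ)+(l:ℝ)+((d:ℝ)-1)/2))) -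
        Real.exp (-α*r/(2*((n:ℝ)+(l:ℝ)+((d:ℝ)-1)/2)))| ≤ C * κ := by
  set D : ℝ := (n:ℝ)+(l:ℝ)+((d:ℝ)-1)/2 with hDdef
  have hd2 : (2:ℝ) ≤ (d:ℝ) := by exact_mod_cast hd
  have hn0 : (0:ℝ) ≤ (n:ℝ) := Nat.cast_nonneg n
  have hl0 : (0:ℝ) ≤ (l:ℝ) := Nat.cast_nonneg l
  have hDpos : 0 < D := by rw [hDdef]; linarith
  clear_value D
  obtain ⟨β, hβdef⟩ : ∃ β : ℝ, β = α/(2*D) := ⟨_, rfl⟩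
  have hβ : 0 < β := by rw [hβdef]; positivity
  obtain ⟨M, hMdef⟩ : ∃ M : ℝ, M = (n:ℝ)*R + β*R^2 := ⟨_, rfl⟩
  have hM : 0 < M := by rw [hMdef]; positivity
  refine ⟨M * Real.exp M, by positivity, 1, one_pos, ?_⟩
  intro κ hκ hκ1 r hr
  obtain ⟨hr0, hrR⟩ := hr
  obtain ⟨s, hsdef⟩ : ∃ s : ℝ, s = Real.arsinh (κ*r) := ⟨_, rfl⟩
  have hκr : 0 ≤ κ*r := by positivity
  have hs0 : 0 ≤ s := hsdef ▸ Real.arsinh_nonneg_iff.2 hκr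
  have hs1 : s ≤ κ*r := hsdef ▸ my_arsinh_le_self hκr
  have hs2 : κ*r - (κ*r)^2 ≤ s := hsdef ▸ my_arsinh_ge hκr
  have hbase : Real.sqrt (1+κ^2*r^2) + κ*r = Real.exp s := by
    rw [hsdef, Real.exp_arsinh, show 1+(κ*r)^2 = 1+κ^2*r^2 by ring]; ring
  have hfrac : α/(2*κ*D) = β/κ := by
    rw [hβdef, div_div]; ring_nf
  obtain ⟨t, htdef⟩ : ∃ t : ℝ, t = -α*r/(2*D) := ⟨_, rfl⟩
  have ht : t = -(β*r) := by
    rw [htdef, hβdef]; ring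
  obtain ⟨u, hudef⟩ : ∃ u : ℝ, u = s*(-(n:ℝ) - β/κ) - t := ⟨_, rfl⟩
  have hsp : s*(-(n:ℝ) - β/κ) = t + u := by rw [hudef]; ring
  have hLHS : (Real.sqrt (1+κ^2*r^2) + κ*r) ^ (-(n:ℝ) - α/(2*κ*D)) - Real.exp t
      = Real.exp t * (Real.exp u - 1) := by
    rw [hfrac, hbase, ← Real.exp_mul, hsp, Real.exp_add]; ring
  obtain ⟨q, hqdef⟩ : ∃ q : ℝ, q = s/κ := ⟨_, rfl⟩
  have hq1 : q ≤ r := by rw [hqdef, div_le_iff₀ hκ]; nlinarith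
  have hq2 : r - κ*r^2 ≤ q := by rw [hqdef, le_div_iff₀ hκ]; nlinarith
  have hu : u = -(n:ℝ)*s + β*(r - q) := by
    rw [hudef, ht, hqdef]; ring
  have hsκR : s ≤ κ*R := hs1.trans (mul_le_mul_of_nonneg_left hrR hκ.le)
  have habs : |u| ≤ M*κ := by
    rw [abs_le, hu, hMdef]
    have h1 : 0 ≤ β*(r - q) := mul_nonneg hβ.le (by linarith)
    have h2 : (n:ℝ)*s ≤ (n:ℝ)*(κ*R) := mul_le_mul_of_nonneg_left hsκR hn0
    have h4 : 0 ≤ β*R^2*κ := by positivity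
    have h5 : r - q ≤ κ*R^2 := by
      have hr2 : r^2 ≤ R^2 := pow_le_pow_left₀ hr0 hrR 2
      have : κ*r^2 ≤ κ*R^2 := mul_le_mul_of_nonneg_left hr2 hκ.le
      linarith
    have h6 : β*(r - q) ≤ β*(κ*R^2) := mul_le_mul_of_nonneg_left h5 hβ.le
    have h7 : 0 ≤ (n:ℝ)*R*κ := by positivity
    have h8 : 0 ≤ (n:ℝ)*s := mul_nonneg hn0 hs0
    constructor
    · have he : -(((n:ℝ)*R + β*R^2)*κ) = -((n:ℝ)*(κ*R)) - β*R^2*κ := by ring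
      rw [he]; linarith
    · have he : ((n:ℝ)*R + β*R^2)*κ = (n:ℝ)*R*κ + β*(κ*R^2) := by ring
      rw [he]; linarith
  have habsM : |u| ≤ M := le_trans habs (by nlinarith)
  have hexpt : Real.exp t ≤ 1 := by
    rw [Real.exp_le_one_iff, ht]; nlinarith
  rw [show -α*r/(2*D) = t from htdef.symm]
  calc |(Real.sqrt (1+κ^2*r^2) + κ*r) ^ (-(n:ℝ) - α/(2*κ*D)) - Real.exp t|
      = Real.exp t * |Real.exp u - 1| := by
        rw [hLHS, abs_mul, abs_of_pos (Real.exp_pos t)]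
    _ ≤ 1 * (|u| * Real.exp |u|) :=
        mul_le_mul hexpt my_exp_sub_one (abs_nonneg _) zero_le_one
    _ ≤ 1 * ((M*κ) * Real.exp M) := by
        apply mul_le_mul_of_nonneg_left _ zero_le_one
        exact mul_le_mul habs (Real.exp_le_exp.2 habsM) (Real.exp_pos _).le (by positivity)
    _ = (M * Real.exp M) * κ := by ring
end

section
/- Let d≥2, κ>0, λ>((d−1)κ/2)², let l≥0 be an integer and ρ₀>0. Then every solution w of the ODE w''(ρ)+(d−1)κ·(cosh(κρ)/sinh(κρ))·w'(ρ)−κ²l(l+d−2)·sinh(κρ)^{−2}·w(ρ)+λw(ρ)=0 on (ρ₀,∞) satisfies a pointwise bound |w(ρ)|≤C e^{−((d−1)/2)κρ} for some constant C>0 and all ρ≥ρ₀+1. -/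
open MeasureTheory Real Filter Set
open scoped Classical
private lemma sinh_deriv_aux (κ ρ : ℝ) :
    HasDerivAt (fun x => Real.sinh (κ*x)) (κ * Real.cosh (κ*ρ)) ρ := by
  have hlin : HasDerivAt (fun x : ℝ => κ * x) κ ρ := by
    simpa using (hasDerivAt_id ρ).const_mul κ
  have h := (Real.hasDerivAt_sinh (κ*ρ)).comp ρ hlin
  rw [show κ * Real.cosh (κ*ρ) = Real.cosh (κ*ρ) * κ by ring]
  exact h

private lemma cosh_deriv_aux (κ ρ : ℝ) :
    HasDerivAt (fun x => Real.cosh (κ*x)) (κ * Real.sinh (κ*ρ)) ρ := by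
  have hlin : HasDerivAt (fun x : ℝ => κ * x) κ ρ := by
    simpa using (hasDerivAt_id ρ).const_mul κ
  have h := (Real.hasDerivAt_cosh (κ*ρ)).comp ρ hlin
  rw [show κ * Real.sinh (κ*ρ) = Real.sinh (κ*ρ) * κ by ring]
  exact h

private lemma coth_deriv_aux (κ ρ : ℝ) (hs : 0 < Real.sinh (κ*ρ)) :
    HasDerivAt (fun x => Real.cosh (κ*x)/Real.sinh (κ*x)) (-(κ / (Real.sinh (κ*ρ))^2)) ρ := by
  have h := (cosh_deriv_aux κ ρ).div (sinh_deriv_aux κ ρ) (ne_of_gt hs)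
  refine h.congr_deriv (Eq.symm ?_)
  have hc := Real.cosh_sq (κ*ρ)
  field_simp
  linear_combination κ * hc

private lemma decay_aux (κ μsq c ρ₀ : ℝ) (hκ : 0 < κ) (hρ₀ : 0 < ρ₀) (hμsq : 0 < μsq)
    (u u1 : ℝ → ℝ)
    (hu : ∀ ρ ∈ Set.Ioi ρ₀, HasDerivAt u (u1 ρ) ρ)
    (hu1 : ∀ ρ ∈ Set.Ioi ρ₀,
      HasDerivAt u1 ((c * κ^2 / (Real.sinh (κ*ρ))^2 - μsq) * u ρ) ρ) :
    ∃ M : ℝ, 0 ≤ M ∧ ∀ ρ, ρ₀ + 1 ≤ ρ → |u ρ| ≤ M := by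
  set μ : ℝ := Real.sqrt μsq with hμdef
  have hμpos : 0 < μ := Real.sqrt_pos.mpr hμsq
  have hμ2 : μ^2 = μsq := Real.sq_sqrt hμsq.le
  set G : ℝ → ℝ := fun ρ => u1 ρ * u1 ρ + μsq * (u ρ * u ρ) with hGdef
  set Φ : ℝ → ℝ := fun ρ => -(abs c*κ/μ) * (Real.cosh (κ*ρ)/Real.sinh (κ*ρ)) with hΦdef
  set Hf : ℝ → ℝ := fun ρ => G ρ * Real.exp (-Φ ρ) with hHdef
  have hmem : ∀ ρ : ℝ, ρ₀ + 1 ≤ ρ → ρ ∈ Set.Ioi ρ₀ := by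
    intro ρ h; simp only [Set.mem_Ioi]; linarith
  have hspos : ∀ ρ ∈ Set.Ioi ρ₀, 0 < Real.sinh (κ*ρ) := by
    intro ρ hρ
    exact Real.sinh_pos_iff.mpr (mul_pos hκ (lt_trans hρ₀ hρ))
  have hGnonneg : ∀ ρ, 0 ≤ G ρ := by
    intro ρ; simp only [hGdef]; nlinarith [sq_nonneg (u1 ρ), sq_nonneg (u ρ), hμsq]
  -- derivative of G
  have hdG : ∀ ρ ∈ Set.Ioi ρ₀,
      HasDerivAt G (2 * (c * κ^2 / (Real.sinh (κ*ρ))^2) * u ρ * u1 ρ) ρ := by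
    intro ρ hρ
    have h := ((hu1 ρ hρ).mul (hu1 ρ hρ)).add (((hu ρ hρ).mul (hu ρ hρ)).const_mul μsq)
    refine h.congr_deriv (Eq.symm ?_)
    ring
  -- derivative of Φ
  have hdΦ : ∀ ρ ∈ Set.Ioi ρ₀,
      HasDerivAt Φ (abs c*κ^2/(μ * (Real.sinh (κ*ρ))^2)) ρ := by
    intro ρ hρ
    have h := (coth_deriv_aux κ ρ (hspos ρ hρ)).const_mul (-(abs c*κ/μ))
    refine h.congr_deriv (Eq.symm ?_)
    field_simp
  -- derivative of Hf and its sign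
  have hdHf : ∀ ρ ∈ Set.Ioi ρ₀,
      HasDerivAt Hf
        (2 * (c * κ^2 / (Real.sinh (κ*ρ))^2) * u ρ * u1 ρ * Real.exp (-Φ ρ)
          + G ρ * (Real.exp (-Φ ρ) * (-(abs c*κ^2/(μ * (Real.sinh (κ*ρ))^2))))) ρ := by
    intro ρ hρ
    exact (hdG ρ hρ).mul (((hdΦ ρ hρ).neg).exp)
  have hkey : ∀ ρ ∈ Set.Ioi ρ₀,
      2 * (c * κ^2 / (Real.sinh (κ*ρ))^2) * u ρ * u1 ρ
        ≤ (abs c*κ^2/(μ * (Real.sinh (κ*ρ))^2)) * G ρ := by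
    intro ρ hρ
    have hs := hspos ρ hρ
    have hA : 0 < κ^2/(Real.sinh (κ*ρ))^2 := by positivity
    have habs : |2*μ*(u ρ * u1 ρ)| ≤ u1 ρ^2 + μsq * u ρ^2 := by
      rw [abs_le]
      constructor <;> nlinarith [sq_nonneg (μ*u ρ - u1 ρ), sq_nonneg (μ*u ρ + u1 ρ), hμ2]
    have core : 2*μ*(c*(u ρ * u1 ρ)) ≤ abs c * (u1 ρ^2 + μsq * u ρ^2) := by
      have h1 : 2*μ*(c*(u ρ * u1 ρ)) ≤ abs c * |2*μ*(u ρ*u1 ρ)| := by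
        calc 2*μ*(c*(u ρ * u1 ρ)) = c * (2*μ*(u ρ * u1 ρ)) := by ring
        _ ≤ |c * (2*μ*(u ρ * u1 ρ))| := le_abs_self _
        _ = abs c * |2*μ*(u ρ*u1 ρ)| := abs_mul _ _
      exact h1.trans (mul_le_mul_of_nonneg_left habs (abs_nonneg c))
    rw [show (abs c*κ^2/(μ * (Real.sinh (κ*ρ))^2)) * G ρ
        = ((κ^2/(Real.sinh (κ*ρ))^2) * (abs c * (u1 ρ^2 + μsq * u ρ^2)))/μ by
      simp only [hGdef]; field_simp]
    rw [le_div_iff₀ hμpos]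
    calc 2 * (c * κ^2 / (Real.sinh (κ*ρ))^2) * u ρ * u1 ρ * μ
        = (κ^2/(Real.sinh (κ*ρ))^2) * (2*μ*(c*(u ρ * u1 ρ))) := by ring
      _ ≤ (κ^2/(Real.sinh (κ*ρ))^2) * (abs c * (u1 ρ^2 + μsq * u ρ^2)) :=
          mul_le_mul_of_nonneg_left core hA.le
  have hanti : AntitoneOn Hf (Set.Ici (ρ₀+1)) := by
    apply antitoneOn_of_deriv_nonpos (convex_Ici _)
    · intro x hx
      exact ((hdHf x (hmem x hx)).continuousAt).continuousWithinAt
    · intro x hx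
      rw [interior_Ici] at hx
      exact ((hdHf x (hmem x hx.le)).differentiableAt).differentiableWithinAt
    · intro x hx
      rw [interior_Ici] at hx
      have hxm := hmem x hx.le
      rw [(hdHf x hxm).deriv]
      have hk := hkey x hxm
      have he := Real.exp_pos (-Φ x)
      nlinarith [hGnonneg x, he, hk]
  -- Φ ≤ 0 hence exp(-Φ) ≥ 1
  have hΦle : ∀ ρ ∈ Set.Ioi ρ₀, Φ ρ ≤ 0 := by
    intro ρ hρ
    have hs := hspos ρ hρ
    have hc := Real.cosh_pos (x := κ*ρ)
    simp only [hΦdef]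
    apply mul_nonpos_of_nonpos_of_nonneg
    · have : 0 ≤ abs c*κ/μ := by positivity
      linarith
    · positivity
  set K : ℝ := Hf (ρ₀+1) with hKdef
  have hGle : ∀ ρ, ρ₀ + 1 ≤ ρ → G ρ ≤ K := by
    intro ρ hρ
    have h1 : Hf ρ ≤ Hf (ρ₀+1) := hanti (Set.self_mem_Ici) hρ hρ
    have h2 : 1 ≤ Real.exp (-Φ ρ) := Real.one_le_exp (by linarith [hΦle ρ (hmem ρ hρ)])
    have h3 : G ρ ≤ G ρ * Real.exp (-Φ ρ) := le_mul_of_one_le_right (hGnonneg ρ) h2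
    calc G ρ ≤ Hf ρ := h3
      _ ≤ K := h1
  refine ⟨Real.sqrt (K/μsq), Real.sqrt_nonneg _, fun ρ hρ => ?_⟩
  have h1 : μsq * (u ρ * u ρ) ≤ K := by
    have hg := hGle ρ hρ
    simp only [hGdef] at hg
    nlinarith [mul_self_nonneg (u1 ρ)]
  have h2 : u ρ^2 ≤ K/μsq := by
    rw [le_div_iff₀ hμsq]; nlinarith
  calc |u ρ| = Real.sqrt (u ρ^2) := (Real.sqrt_sq_eq_abs _).symm
    _ ≤ Real.sqrt (K/μsq) := Real.sqrt_le_sqrt h2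

/-- **Decay of solutions of the radial hyperbolic Helmholtz ODE.** For `λ > ((d-1)κ/2)²`,
every solution of `w'' + (d-1)κ coth(κρ) w' - κ² l(l+d-2) sinh(κρ)^{-2} w + λ w = 0` on
`(ρ₀,∞)` satisfies `|w(ρ)| ≤ C e^{-((d-1)/2)κρ}` for `ρ ≥ ρ₀ + 1`. -/
theorem statement_17 (d : ℕ) (hd : 2 ≤ d) (κ lam : ℝ) (hκ : 0 < κ)
    (hlam : (((d:ℝ)-1)*κ/2)^2 < lam) (l : ℕ) (ρ₀ : ℝ) (hρ₀ : 0 < ρ₀)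
    (w w' w'' : ℝ → ℝ)
    (hw : ∀ ρ ∈ Set.Ioi ρ₀, HasDerivAt w (w' ρ) ρ)
    (hw' : ∀ ρ ∈ Set.Ioi ρ₀, HasDerivAt w' (w'' ρ) ρ)
    (hode : ∀ ρ ∈ Set.Ioi ρ₀,
      w'' ρ + ((d:ℝ)-1) * κ * (Real.cosh (κ*ρ) / Real.sinh (κ*ρ)) * w' ρ
        - κ^2 * ((l:ℝ)*((l:ℝ)+(d:ℝ)-2)) / (Real.sinh (κ*ρ))^2 * w ρ + lam * w ρ = 0) :
    ∃ C > (0:ℝ), ∀ ρ : ℝ, ρ₀ + 1 ≤ ρ → |w ρ| ≤ C * Real.exp (-(((d:ℝ)-1)/2) * κ * ρ) := by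
  set ν : ℝ := ((d:ℝ)-1)/2 with hνdef
  have hd2 : (2:ℝ) ≤ (d:ℝ) := by exact_mod_cast hd
  have hνpos : 0 < ν := by rw [hνdef]; linarith
  set L : ℝ := (l:ℝ)*((l:ℝ)+(d:ℝ)-2) with hLdef
  set c : ℝ := L + ν*(ν-1) with hcdef
  set μsq : ℝ := lam - (ν*κ)^2 with hμsqdef
  have hμsq : 0 < μsq := by
    have h : (((d:ℝ)-1)*κ/2)^2 = (ν*κ)^2 := by rw [hνdef]; ring
    rw [hμsqdef]; nlinarith [hlam]
  have hspos : ∀ ρ ∈ Set.Ioi ρ₀, 0 < Real.sinh (κ*ρ) := by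
    intro ρ hρ
    exact Real.sinh_pos_iff.mpr (mul_pos hκ (lt_trans hρ₀ hρ))
  set φ : ℝ → ℝ := fun x => Real.exp (ν * Real.log (Real.sinh (κ*x))) with hφdef
  set u : ℝ → ℝ := fun x => φ x * w x with hudef
  set u1 : ℝ → ℝ := fun x =>
    (ν*κ) * (Real.cosh (κ*x)/Real.sinh (κ*x)) * u x + φ x * w' x with hu1def
  have hφpos : ∀ x, 0 < φ x := fun x => Real.exp_pos _
  -- derivative of φ
  have hdφ : ∀ ρ ∈ Set.Ioi ρ₀,
      HasDerivAt φ ((ν*κ) * (Real.cosh (κ*ρ)/Real.sinh (κ*ρ)) * φ ρ) ρ := by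
    intro ρ hρ
    have hs := hspos ρ hρ
    have hlog := (sinh_deriv_aux κ ρ).log (ne_of_gt hs)
    have h := (hlog.const_mul ν).exp
    convert h using 1
    simp only [hφdef]
    ring
  have hdu : ∀ ρ ∈ Set.Ioi ρ₀, HasDerivAt u (u1 ρ) ρ := by
    intro ρ hρ
    have h := (hdφ ρ hρ).mul (hw ρ hρ)
    refine h.congr_deriv (Eq.symm ?_)
    simp only [hu1def, hudef]
    ring
  have hdu1 : ∀ ρ ∈ Set.Ioi ρ₀,
      HasDerivAt u1 ((c * κ^2 / (Real.sinh (κ*ρ))^2 - μsq) * u ρ) ρ := by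
    intro ρ hρ
    have hs := hspos ρ hρ
    have hB : HasDerivAt (fun x => (ν*κ) * (Real.cosh (κ*x)/Real.sinh (κ*x)))
        ((ν*κ) * (-(κ / (Real.sinh (κ*ρ))^2))) ρ :=
      (coth_deriv_aux κ ρ hs).const_mul (ν*κ)
    have h := (hB.mul (hdu ρ hρ)).add ((hdφ ρ hρ).mul (hw' ρ hρ))
    refine h.congr_deriv (Eq.symm ?_)
    have hODE := hode ρ hρ
    have hC2 := Real.cosh_sq (κ*ρ)
    simp only [hu1def, hudef, hcdef, hLdef, hμsqdef]
    have hd1 : (d:ℝ) - 1 = 2*ν := by rw [hνdef]; ring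
    rw [hd1] at hODE
    have hs2 : Real.sinh (κ*ρ)^2 * ((Real.sinh (κ*ρ))⁻¹)^2 = 1 := by
      field_simp
    linear_combination (-(ν^2*κ^2* Real.exp (ν * Real.log (Real.sinh (κ*ρ))) * w ρ)) * hs2
      + (-(Real.exp (ν * Real.log (Real.sinh (κ*ρ))))) * hODE
      + (-(ν^2*κ^2* Real.exp (ν * Real.log (Real.sinh (κ*ρ))) * w ρ/(Real.sinh (κ*ρ))^2)) * hC2
  obtain ⟨M, hM0, hM⟩ := decay_aux κ μsq c ρ₀ hκ hρ₀ hμsq u u1 hdu hdu1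
  set ε : ℝ := (1 - Real.exp (-(2*κ*(ρ₀+1))))/2 with hεdef
  have hεpos : 0 < ε := by
    have : Real.exp (-(2*κ*(ρ₀+1))) < 1 := Real.exp_lt_one_iff.mpr (by nlinarith)
    rw [hεdef]; linarith
  refine ⟨M * Real.exp (-ν * Real.log ε) + 1, by positivity, fun ρ hρ => ?_⟩
  have hρm : ρ ∈ Set.Ioi ρ₀ := by simp only [Set.mem_Ioi]; linarith
  have hs := hspos ρ hρm
  -- lower bound on sinh
  have hsinh_lb : ε * Real.exp (κ*ρ) ≤ Real.sinh (κ*ρ) := by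
    rw [Real.sinh_eq]
    have h1 : Real.exp (-(κ*ρ)) = Real.exp (κ*ρ) * Real.exp (-(2*(κ*ρ))) := by
      rw [← Real.exp_add]; ring_nf
    have h2 : Real.exp (-(2*(κ*ρ))) ≤ Real.exp (-(2*κ*(ρ₀+1))) := by
      apply Real.exp_le_exp.mpr
      nlinarith
    rw [hεdef, h1]
    have he := Real.exp_pos (κ*ρ)
    nlinarith
  have hφ_lb : Real.exp (ν * (Real.log ε + κ*ρ)) ≤ φ ρ := by
    apply Real.exp_le_exp.mpr
    apply mul_le_mul_of_nonneg_left _ hνpos.le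
    calc Real.log ε + κ*ρ = Real.log (ε * Real.exp (κ*ρ)) := by
          rw [Real.log_mul (ne_of_gt hεpos) (ne_of_gt (Real.exp_pos _)), Real.log_exp]
      _ ≤ Real.log (Real.sinh (κ*ρ)) :=
          Real.log_le_log (by positivity) hsinh_lb
  have hwρ : |w ρ| = |u ρ| / φ ρ := by
    simp only [hudef]
    rw [abs_mul, abs_of_pos (hφpos ρ)]
    exact (mul_div_cancel_left₀ _ (ne_of_gt (hφpos ρ))).symm
  rw [hwρ]
  have huM := hM ρ hρ
  have key : |u ρ| / φ ρ ≤ M * (Real.exp (-ν * Real.log ε) * Real.exp (-(ν*(κ*ρ)))) := by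
    rw [div_le_iff₀ (hφpos ρ)]
    calc |u ρ| ≤ M := huM
      _ = M * (Real.exp (-ν * Real.log ε) * Real.exp (-(ν*(κ*ρ))) * Real.exp (ν * (Real.log ε + κ*ρ))) := by
          rw [← Real.exp_add, ← Real.exp_add,
            show (-ν * Real.log ε) + (-(ν*(κ*ρ))) + ν * (Real.log ε + κ*ρ) = 0 by ring,
            Real.exp_zero, mul_one]
      _ ≤ M * (Real.exp (-ν * Real.log ε) * Real.exp (-(ν*(κ*ρ))) * φ ρ) := by
          apply mul_le_mul_of_nonneg_left _ hM0
          apply mul_le_mul_of_nonneg_left hφ_lb (by positivity)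
      _ = M * (Real.exp (-ν * Real.log ε) * Real.exp (-(ν*(κ*ρ)))) * φ ρ := by ring
  calc |u ρ| / φ ρ ≤ M * (Real.exp (-ν * Real.log ε) * Real.exp (-(ν*(κ*ρ)))) := key
    _ = (M * Real.exp (-ν * Real.log ε)) * Real.exp (-ν * κ * ρ) := by ring_nf
    _ ≤ (M * Real.exp (-ν * Real.log ε) + 1) * Real.exp (-ν * κ * ρ) := by
        have := Real.exp_pos (-ν * κ * ρ); nlinarith [Real.exp_pos (-ν*κ*ρ)]
end
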